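/- arXiv:0710.5839 — 4 statements merged into one kernel-verified Lean document; each statement's English description precedes it below -/
import Mathlib

section
/- Let E be a finite-generated module over L^0 which is homogeneous of type n. Then E admits a basis {φ₁,…,φₙ} of ∇-linearly independent elements, i.e. every φ ∈ E is uniquely representable as φ = α₁φ₁ + … + αₙφₙ with αᵢ ∈ L^0. -/
open MeasureTheory

namespace KHPaper

variable {Ω : Type} [MeasurableSpace Ω] {μ : Measure Ω}

/-- `L⁰(Ω)`: measurable complex functions modulo a.e. equality. -/
abbrev L0 (Ω : Type) [MeasurableSpace Ω] (μ : Measure Ω) := Ω →ₘ[μ] ℂ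
/-- real-valued `L⁰`. -/
abbrev L0R (Ω : Type) [MeasurableSpace Ω] (μ : Measure Ω) := Ω →ₘ[μ] ℝ

noncomputable instance : CommRing (L0 Ω μ) :=
  { (inferInstance : AddCommGroup (L0 Ω μ)),
    (inferInstance : CommMonoid (L0 Ω μ)) with
    left_distrib := by
      intro a b c
      apply AEEqFun.ext
      filter_upwards [AEEqFun.coeFn_mul a (b + c), AEEqFun.coeFn_add b c,
        AEEqFun.coeFn_mul a b, AEEqFun.coeFn_mul a c,
        AEEqFun.coeFn_add (a * b) (a * c)] with x h1 h2 h3 h4 h5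
      simp only [h1, h5, Pi.mul_apply, Pi.add_apply, h2, h3, h4, mul_add]
    right_distrib := by
      intro a b c
      apply AEEqFun.ext
      filter_upwards [AEEqFun.coeFn_mul (a + b) c, AEEqFun.coeFn_add a b,
        AEEqFun.coeFn_mul a c, AEEqFun.coeFn_mul b c,
        AEEqFun.coeFn_add (a * c) (b * c)] with x h1 h2 h3 h4 h5
      simp only [h1, h5, Pi.mul_apply, Pi.add_apply, h2, h3, h4, add_mul]
    zero_mul := by
      intro a
      apply AEEqFun.ext
      filter_upwards [AEEqFun.coeFn_mul 0 a, AEEqFun.coeFn_zero (β := ℂ) (μ := μ)] with x h1 h2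
      simp [h1, h2]
    mul_zero := by
      intro a
      apply AEEqFun.ext
      filter_upwards [AEEqFun.coeFn_mul a 0, AEEqFun.coeFn_zero (β := ℂ) (μ := μ)] with x h1 h2
      simp [h1, h2] }

/-- pointwise absolute value `L⁰ → L⁰ℝ`. -/
noncomputable def absL (f : L0 Ω μ) : L0R Ω μ := f.comp (fun z : ℂ => ‖z‖) continuous_norm
/-- pointwise real part. -/
noncomputable def reL (f : L0 Ω μ) : L0R Ω μ := f.comp Complex.re Complex.continuous_re
/-- pointwise complex conjugation. -/
noncomputable def conjL (f : L0 Ω μ) : L0 Ω μ :=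
  f.comp (starRingEnd ℂ) (by continuity)
/-- embedding of real `L⁰` into complex `L⁰`. -/
noncomputable def ofRealL (f : L0R Ω μ) : L0 Ω μ := f.comp Complex.ofReal Complex.continuous_ofReal
/-- pointwise square root on real `L⁰`. -/
noncomputable def sqrtL (f : L0R Ω μ) : L0R Ω μ := f.comp Real.sqrt Real.continuous_sqrt
/-- constants. -/
noncomputable def constL (Ω : Type) [MeasurableSpace Ω] (μ : Measure Ω) (c : ℂ) : L0 Ω μ :=
  AEEqFun.const Ω c

/-- idempotents of `L⁰` (the Boolean algebra `∇`). -/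
def IsIdem (π : L0 Ω μ) : Prop := π * π = π

/-- A family of idempotents is a partition of the unit in `∇`. -/
def IsPartition {ι : Type*} (π : ι → L0 Ω μ) : Prop :=
  (∀ i, IsIdem (π i)) ∧ (∀ i j, i ≠ j → π i * π j = 0) ∧
    (∀ e : L0 Ω μ, IsIdem e → (∀ i, π i * e = 0) → e = 0)

/-- a decreasing net of nonnegative elements of `L⁰ℝ` has infimum zero. -/
def InfZero {ι : Type*} (e : ι → L0R Ω μ) : Prop :=
  (∀ i, 0 ≤ e i) ∧ ∀ g : L0R Ω μ, (∀ i, g ≤ e i) → g ≤ 0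

/-- `(o)`-convergence of a net in `L⁰ℝ`. -/
def OConv {ι : Type*} [Preorder ι] (f : ι → L0R Ω μ) (l : L0R Ω μ) : Prop :=
  ∃ e : ι → L0R Ω μ, Antitone e ∧ InfZero e ∧ ∀ i, |f i - l| ≤ e i

/-- `(o)`-summability of a family in `L⁰ℝ` (order convergence of the net of partial sums). -/
def OSummable {ι : Type*} (g : ι → L0R Ω μ) : Prop :=
  ∃ s : L0R Ω μ, OConv (fun F : Finset ι => ∑ i ∈ F, g i) s

section LNS

variable {X : Type*} [AddCommGroup X]

/-- An `L⁰`-valued norm making `X` a lattice-normed space over `L⁰` (complex vector space case). -/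
structure LNSNorm (Ω : Type) [MeasurableSpace Ω] (μ : Measure Ω)
    (X : Type*) [AddCommGroup X] [Module ℂ X] where
  nrm : X → L0R Ω μ
  nrm_nonneg : ∀ x, 0 ≤ nrm x
  nrm_eq_zero : ∀ x, nrm x = 0 ↔ x = 0
  nrm_smul : ∀ (c : ℂ) (x : X), nrm (c • x) = ‖c‖ • nrm x
  nrm_triangle : ∀ x y, nrm (x + y) ≤ nrm x + nrm y

variable [Module ℂ X]

/-- `d`-decomposability (Kantorovich norm). -/
def LNSNorm.DDecomp (N : LNSNorm Ω μ X) : Prop :=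
  ∀ (x : X) (e₁ e₂ : L0R Ω μ), 0 ≤ e₁ → 0 ≤ e₂ → e₁ ⊓ e₂ = 0 → N.nrm x = e₁ + e₂ →
    ∃ x₁ x₂ : X, x = x₁ + x₂ ∧ N.nrm x₁ = e₁ ∧ N.nrm x₂ = e₂

/-- `(bo)`-convergence of a net in `X`. -/
def LNSNorm.BOConv (N : LNSNorm Ω μ X) {ι : Type*} [Preorder ι] (f : ι → X) (l : X) : Prop :=
  OConv (fun i => N.nrm (f i - l)) 0

/-- `(bo)`-Cauchy nets. -/
def LNSNorm.BOCauchy (N : LNSNorm Ω μ X) {ι : Type*} [Preorder ι] (f : ι → X) : Prop :=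
  ∃ e : ι → L0R Ω μ, Antitone e ∧ InfZero e ∧
    ∀ i j k, k ≤ i → k ≤ j → N.nrm (f i - f j) ≤ e k

/-- `(bo)`-completeness. -/
def LNSNorm.BOComplete (N : LNSNorm Ω μ X) : Prop :=
  ∀ (ι : Type) (_ : Nonempty ι) (_ : SemilatticeSup ι) (f : ι → X),
    N.BOCauchy f → ∃ l : X, N.BOConv f l

end LNS

section Norms
variable {X : Type*} [AddCommGroup X]
def DDecompN (nrm : X → L0R Ω μ) : Prop :=
  ∀ (x : X) (e₁ e₂ : L0R Ω μ), 0 ≤ e₁ → 0 ≤ e₂ → e₁ ⊓ e₂ = 0 → nrm x = e₁ + e₂ →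
    ∃ x₁ x₂ : X, x = x₁ + x₂ ∧ nrm x₁ = e₁ ∧ nrm x₂ = e₂
def BOConvN (nrm : X → L0R Ω μ) {ι : Type*} [Preorder ι] (f : ι → X) (l : X) : Prop :=
  OConv (fun i => nrm (f i - l)) 0
def BOCauchyN (nrm : X → L0R Ω μ) {ι : Type*} [Preorder ι] (f : ι → X) : Prop :=
  ∃ e : ι → L0R Ω μ, Antitone e ∧ InfZero e ∧
    ∀ i j k, k ≤ i → k ≤ j → nrm (f i - f j) ≤ e k
def BOCompleteN (nrm : X → L0R Ω μ) : Prop :=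
  ∀ (ι : Type) (_ : Nonempty ι) (_ : SemilatticeSup ι) (f : ι → X),
    BOCauchyN nrm f → ∃ l : X, BOConvN nrm f l
def BODenseN (nrm : X → L0R Ω μ) (D : Set X) : Prop :=
  ∀ x : X, ∃ (ι : Type) (_ : Nonempty ι) (_ : SemilatticeSup ι) (f : ι → X),
    (∀ i, f i ∈ D) ∧ BOConvN nrm f x
end Norms

/-- An `L⁰`-valued inner product on an `L⁰`-module. -/
structure KHInner (Ω : Type) [MeasurableSpace Ω] (μ : Measure Ω)
    (X : Type*) [AddCommGroup X] [Module (L0 Ω μ) X] where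
  inner : X → X → L0 Ω μ
  add_left : ∀ x y z, inner (x + y) z = inner x z + inner y z
  smul_left : ∀ (c : L0 Ω μ) (x y : X), inner (c • x) y = c * inner x y
  conj_symm : ∀ x y, inner x y = conjL (inner y x)
  self_real : ∀ x, inner x x = ofRealL (reL (inner x x))
  self_nonneg : ∀ x, 0 ≤ reL (inner x x)
  definite : ∀ x, inner x x = 0 → x = 0

section KH
variable {X : Type*} [AddCommGroup X] [Module (L0 Ω μ) X]
noncomputable def KHInner.knorm (K : KHInner Ω μ X) (x : X) : L0R Ω μ :=
  sqrtL (reL (K.inner x x))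
/-- `X` is a Kaplansky-Hilbert module: the induced norm is d-decomposable and (bo)-complete. -/
def KHInner.IsKH (K : KHInner Ω μ X) : Prop := DDecompN K.knorm ∧ BOCompleteN K.knorm

variable (K : KHInner Ω μ X) (D : Submodule (L0 Ω μ) X)
/-- operators with domain `D` mapping into `D`. -/
def MapsD (a : D →ₗ[L0 Ω μ] X) : Prop := ∀ φ : D, a φ ∈ D
def IsAdjAt (a : D →ₗ[L0 Ω μ] X) (ψ χ : X) : Prop :=
  ∀ φ : D, K.inner (a φ) ψ = K.inner (φ : X) χ
def AdjDomain (a : D →ₗ[L0 Ω μ] X) : Set X := {ψ | ∃ χ, IsAdjAt K D a ψ χ}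
/-- `L⁺(D)`. -/
def LPlus : Set (D →ₗ[L0 Ω μ] X) :=
  {a | MapsD D a ∧ (D : Set X) ⊆ AdjDomain K D a ∧
       ∀ ψ ∈ D, ∃ χ ∈ D, IsAdjAt K D a ψ χ}
def BOClosableOp (a : D →ₗ[L0 Ω μ] X) : Prop :=
  ∀ (ι : Type) (_ : Nonempty ι) (_ : SemilatticeSup ι) (f : ι → D) (y : X),
    BOConvN K.knorm (fun i => (f i : X)) 0 → BOConvN K.knorm (fun i => a (f i)) y → y = 0
/-- composition `a ∘ b` of operators on `D`, when `b` maps into `D`. -/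
noncomputable def compD (a b : D →ₗ[L0 Ω μ] X) (hb : MapsD D b) : D →ₗ[L0 Ω μ] X :=
  a.comp (LinearMap.codRestrict D b hb)

/-- endomorphism version: an operator on `D` having an adjoint with domain `⊇ D` and values in `D`. -/
def HasAdjE (a : Module.End (L0 Ω μ) D) : Prop :=
  ∀ ψ : D, ∃ χ : D, ∀ φ : D, K.inner (a φ : X) (ψ : X) = K.inner (φ : X) (χ : X)
/-- `L⁺(D)` realized inside `End(D)`. -/
def LPlusE : Set (Module.End (L0 Ω μ) D) := {a | HasAdjE K D a}
def IsAdjPairE (a b : Module.End (L0 Ω μ) D) : Prop :=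
  ∀ φ ψ : D, K.inner (a φ : X) (ψ : X) = K.inner (φ : X) (b ψ : X)
/-- the rank one operator `φ ⊗ ψ` on `D`. -/
noncomputable def rankOneE (φ ψ : D) : Module.End (L0 Ω μ) D where
  toFun η := K.inner (η : X) (ψ : X) • φ
  map_add' a b := by
    show K.inner (↑(a + b)) _ • φ = _
    rw [Submodule.coe_add, K.add_left]
    exact add_smul _ _ φ
  map_smul' c a := by
    show K.inner (↑(c • a)) _ • φ = _
    rw [Submodule.coe_smul, K.smul_left, RingHom.id_apply]
    exact mul_smul c _ φ
end KH

section Ops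
variable {M : Type*} [AddCommGroup M] [Module (L0 Ω μ) M]
/-- finite-generated operator: its range is a finite-generated submodule. -/
def FinGenOp (a : Module.End (L0 Ω μ) M) : Prop :=
  ∃ (n : ℕ) (g : Fin n → M), ∀ x : M, ∃ c : Fin n → L0 Ω μ, a x = ∑ i, c i • g i
def IsSubalgebraSet (U : Set (Module.End (L0 Ω μ) M)) : Prop :=
  (∀ a ∈ U, ∀ b ∈ U, a + b ∈ U) ∧ (∀ (c : L0 Ω μ), ∀ a ∈ U, c • a ∈ U) ∧
    (∀ a ∈ U, ∀ b ∈ U, a * b ∈ U)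
/-- standard algebras of operators: subalgebras containing all finite-generated operators. -/
def IsStandard (U : Set (Module.End (L0 Ω μ) M)) : Prop :=
  IsSubalgebraSet U ∧ ∀ a, FinGenOp a → a ∈ U
/-- the operator `a` is homogeneous of type one: `d(π ⬝ a(M)) = 1` for every nonzero idempotent. -/
def HomogOneOp (a : Module.End (L0 Ω μ) M) : Prop :=
  ∀ π : L0 Ω μ, IsIdem π → π ≠ 0 →
    (∃ g ∈ Set.range a, ∀ x ∈ Set.range a, ∃ c : L0 Ω μ, π • x = c • (π • g)) ∧
    ∃ x ∈ Set.range a, π • x ≠ 0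
end Ops

section DirectSum
variable {I : Type} [DecidableEq I] {X : I → Type*}
  [∀ i, AddCommGroup (X i)] [∀ i, Module (L0 Ω μ) (X i)]
  (K : ∀ i, KHInner Ω μ (X i)) (D : ∀ i, Submodule (L0 Ω μ) (X i))

/-- `D_I`: the submodule of the direct sum consisting of finitely supported tuples. -/
abbrev DI (D : ∀ i, Submodule (L0 Ω μ) (X i)) := Π₀ i, ↥(D i)

/-- the inner product of `X_I` restricted to `D_I`. -/
noncomputable def innerDI (φ ψ : DI D) : L0 Ω μ :=
  letI : ∀ (i : I) (x : ↥(D i)), Decidable (x ≠ 0) := fun _ x => Classical.dec _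
  φ.sum fun i x => (K i).inner (x : X i) ((ψ i : X i))

/-- the canonical copy of an operator on `D i` acting on `D_I`. -/
noncomputable def coordOp (i : I) (b : Module.End (L0 Ω μ) ↥(D i)) :
    Module.End (L0 Ω μ) (DI D) :=
  (DFinsupp.lsingle (R := L0 Ω μ) i).comp (b.comp (DFinsupp.lapply (R := L0 Ω μ) i))

/-- the canonical copy of the rank one operator `φ ⊗ φ`, `φ ∈ D i`, on `D_I`. -/
noncomputable def coordRankOne (i : I) (φ : ↥(D i)) : Module.End (L0 Ω μ) (DI D) :=
  coordOp D i (rankOneE (K i) (D i) φ φ)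

/-- coordinatewise operators `(a_i)` with each `a_i ∈ L⁺(D_i)`: the algebra `L⁺(D_i : i ∈ I)`. -/
def CoordLPlus : Set (Module.End (L0 Ω μ) (DI D)) :=
  {a | ∃ f : ∀ i, Module.End (L0 Ω μ) ↥(D i),
    (∀ i, HasAdjE (K i) (D i) (f i)) ∧ ∀ (φ : DI D) (i : I), a φ i = f i (φ i)}

/-- adjoint pairs on `D_I`. -/
def IsAdjPairDI (a b : Module.End (L0 Ω μ) (DI D)) : Prop :=
  ∀ φ ψ : DI D, innerDI K D (a φ) ψ = innerDI K D φ (b ψ)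

/-- the maximal `O*`-algebra `L⁺(D_I)`. -/
def LPlusDI : Set (Module.End (L0 Ω μ) (DI D)) :=
  {a | ∃ b, IsAdjPairDI K D a b}

/-- `*`-subalgebras of operators on `D_I`. -/
def IsStarSubalgDI (A : Set (Module.End (L0 Ω μ) (DI D))) : Prop :=
  IsSubalgebraSet A ∧ ∀ a ∈ A, ∃ b ∈ A, IsAdjPairDI K D a b

/-- projections on `D_I`: idempotent and self-adjoint. -/
def IsProjDI (p : Module.End (L0 Ω μ) (DI D)) : Prop :=
  p * p = p ∧ IsAdjPairDI K D p p

/-- the range of `p` is concentrated on a single coordinate. -/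
def SingleCoordRange (p : Module.End (L0 Ω μ) (DI D)) : Prop :=
  ∃ i : I, ∀ (φ : DI D) (j : I), j ≠ i → p φ j = 0

/-- `M(A)`: rank one projections in `A` whose range generators have a unique
nonzero coordinate. -/
def MSet (A : Set (Module.End (L0 Ω μ) (DI D))) :
    Set (Module.End (L0 Ω μ) (DI D)) :=
  {p | p ∈ A ∧ IsProjDI K D p ∧ HomogOneOp p ∧ SingleCoordRange D p}

end DirectSum
/-- A Banach–Kantorovich space over `L⁰` with its `L⁰`-module structure. -/
structure BKSpace (Ω : Type) [MeasurableSpace Ω] (μ : Measure Ω)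
    (X : Type*) [AddCommGroup X] [Module (L0 Ω μ) X] where
  nrm : X → L0R Ω μ
  nrm_nonneg : ∀ x, 0 ≤ nrm x
  nrm_eq_zero : ∀ x, nrm x = 0 ↔ x = 0
  nrm_smul : ∀ (c : L0 Ω μ) (x : X), nrm (c • x) = absL c * nrm x
  nrm_triangle : ∀ x y, nrm (x + y) ≤ nrm x + nrm y
  ddecomp : DDecompN nrm
  complete : BOCompleteN nrm


/-! In `L⁰` every `α` has a pseudo-inverse `β` with `α β α = α`, and `e = β α` is then an idempotent
with `e α = α`. Pick `n = d(E)` generators `φ` of `E`. If `∑ dᵢ φᵢ = 0` with `dⱼ ≠ 0`, then on the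
nonzero idempotent `e` attached to `dⱼ` the generator `φⱼ` is a combination of the others, so
`d(eE) < n`, contradicting homogeneity. Hence the `φᵢ` are linearly independent, and the
representation of every element is unique. -/

theorem L0.exists_mul_mul_eq_self (α : L0 Ω μ) : ∃ β, α * β * α = α := by
  refine ⟨α.compMeasurable (·⁻¹) measurable_inv, AEEqFun.ext ?_⟩
  filter_upwards [AEEqFun.coeFn_mul (α * α.compMeasurable (·⁻¹) measurable_inv) α,
    AEEqFun.coeFn_mul α (α.compMeasurable (·⁻¹) measurable_inv),
    AEEqFun.coeFn_compMeasurable (·⁻¹) measurable_inv α] with ω h₁ h₂ h₃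
  simp only [h₁, Pi.mul_apply, h₂, h₃, Function.comp_apply, mul_inv_mul_cancel]

section MinGenerators

variable (R M : Type*) [CommRing R] [AddCommGroup M] [Module R M]

/-- The number `d(πM)`. -/
noncomputable def minGenerators (π : R) : ℕ :=
  sInf {m : ℕ | ∃ g : Fin m → M, ∀ x : M, ∃ c : Fin m → R, π • x = ∑ i, c i • (π • g i)}

variable {R M}

theorem exists_fin_minGenerators_one_of_fg
    (hfg : ∃ (m : ℕ) (g : Fin m → M), ∀ x : M, ∃ c : Fin m → R, x = ∑ i, c i • g i) :
    ∃ φ : Fin (minGenerators R M 1) → M,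
      ∀ x : M, ∃ c : Fin (minGenerators R M 1) → R, x = ∑ i, c i • φ i := by
  obtain ⟨m, g, hg⟩ := hfg
  have hmem : minGenerators R M 1 ∈ {m : ℕ | ∃ g : Fin m → M, ∀ x : M, ∃ c : Fin m → R,
      (1 : R) • x = ∑ i, c i • ((1 : R) • g i)} :=
    Nat.sInf_mem ⟨m, g, by simpa only [one_smul] using hg⟩
  obtain ⟨φ, hφ⟩ := hmem
  exact ⟨φ, by simpa only [one_smul] using hφ⟩

theorem smul_mem_span_succAbove_of_sum_smul_eq_zero {m : ℕ} {φ : Fin (m + 1) → M}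
    (hφ : ∀ x : M, ∃ c : Fin (m + 1) → R, x = ∑ i, c i • φ i) {d : Fin (m + 1) → R}
    (hd : ∑ i, d i • φ i = 0)
    {j : Fin (m + 1)} {β e : R} (hβ : β * d j = e) (he : IsIdempotentElem e) (x : M) :
    e • x ∈ Submodule.span R (Set.range fun i => e • φ (j.succAbove i)) := by
  set S := Submodule.span R (Set.range fun i => e • φ (j.succAbove i))
  have hrel : e • φ j + ∑ i, (β * d (j.succAbove i)) • φ (j.succAbove i) = 0 := by
    rw [← hβ, ← Fin.sum_univ_succAbove (fun i => (β * d i) • φ i) j]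
    simp only [mul_smul, ← Finset.smul_sum, hd, smul_zero]
  have hφj : e • φ j ∈ S := by
    have : e • φ j = -∑ i, (β * d (j.succAbove i)) • e • φ (j.succAbove i) := by
      calc e • φ j = e • e • φ j := by rw [smul_smul, he.eq]
        _ = e • -∑ i, (β * d (j.succAbove i)) • φ (j.succAbove i) := by
          rw [eq_neg_of_add_eq_zero_left hrel]
        _ = _ := by simp only [smul_neg, Finset.smul_sum, smul_comm e]
    rw [this]
    exact neg_mem (sum_mem fun i _ => Submodule.smul_mem _ _ (Submodule.subset_span ⟨i, rfl⟩))
  have hφS : ∀ i, e • φ i ∈ S := fun i =>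
    Fin.succAboveCases j hφj (fun i => Submodule.subset_span ⟨i, rfl⟩) i
  obtain ⟨c, rfl⟩ := hφ x
  rw [Finset.smul_sum]
  exact sum_mem fun i _ => smul_comm e (c i) (φ i) ▸ Submodule.smul_mem _ _ (hφS i)

theorem linearIndependent_of_le_minGenerators (hreg : ∀ a : R, ∃ b, a * b * a = a) {n : ℕ}
    {φ : Fin n → M} (hφ : ∀ x : M, ∃ c : Fin n → R, x = ∑ i, c i • φ i)
    (hmin : ∀ e : R, IsIdempotentElem e → e ≠ 0 → n ≤ minGenerators R M e) :
    LinearIndependent R φ := by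
  rw [Fintype.linearIndependent_iff]
  intro d hd j
  by_contra hdj
  obtain ⟨m, rfl⟩ := Nat.exists_eq_succ_of_ne_zero j.pos.ne'
  obtain ⟨β, hβ⟩ := hreg (d j)
  have he : IsIdempotentElem (β * d j) := by
    calc β * d j * (β * d j) = β * (d j * β * d j) := by ring
      _ = β * d j := by rw [hβ]
  have he0 : β * d j ≠ 0 := fun h => hdj <| by rw [← hβ, mul_assoc, h, mul_zero]
  have hle : minGenerators R M (β * d j) ≤ m := Nat.sInf_le ⟨fun i => φ (j.succAbove i), fun x =>
    have ⟨c, hc⟩ := (Submodule.mem_span_range_iff_exists_fun R).1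
      (smul_mem_span_succAbove_of_sum_smul_eq_zero hφ hd rfl he x)
    ⟨c, hc.symm⟩⟩
  have := hmin _ he he0
  omega

theorem existsUnique_sum_smul_of_linearIndependent {n : ℕ} {φ : Fin n → M}
    (hli : LinearIndependent R φ) (hφ : ∀ x : M, ∃ c : Fin n → R, x = ∑ i, c i • φ i) (x : M) :
    ∃! c : Fin n → R, x = ∑ i, c i • φ i :=
  have ⟨c, hc⟩ := hφ x
  ⟨c, hc, fun c' hc' => funext (Fintype.linearIndependent_iffₛ.1 hli c' c (hc'.symm.trans hc))⟩

end MinGenerators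

/-- A finite-generated `L⁰`-module which is homogeneous of type `n`
admits a basis of `n` ∇-linearly independent elements: every element has a unique
representation `φ = α₁φ₁ + ⋯ + αₙφₙ`. -/
theorem statement1 {E : Type*} [AddCommGroup E] [Module (L0 Ω μ) E] (n : ℕ)
    (hfg : ∃ (m : ℕ) (g : Fin m → E), ∀ x : E, ∃ c : Fin m → L0 Ω μ, x = ∑ i, c i • g i)
    (hhom : ∀ π : L0 Ω μ, IsIdem π → π ≠ 0 →
      sInf {m : ℕ | ∃ g : Fin m → E, ∀ x : E, ∃ c : Fin m → L0 Ω μ,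
        π • x = ∑ i, c i • (π • g i)} = n) :
    ∃ φ : Fin n → E, ∀ x : E, ∃! c : Fin n → L0 Ω μ, x = ∑ i, c i • φ i := by
  rcases subsingleton_or_nontrivial (L0 Ω μ) with _ | _
  · have := Module.subsingleton (L0 Ω μ) E
    exact ⟨0, fun x => ⟨0, Subsingleton.elim _ _, fun _ _ => Subsingleton.elim _ _⟩⟩
  · obtain ⟨φ, hφ⟩ := exists_fin_minGenerators_one_of_fg hfg
    have hn : minGenerators (L0 Ω μ) E 1 = n := hhom 1 (mul_one 1) one_ne_zero
    subst hn
    have hli := linearIndependent_of_le_minGenerators L0.exists_mul_mul_eq_self hφ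
      fun e he he0 => (hhom e he he0).ge
    exact ⟨φ, existsUnique_sum_smul_of_linearIndependent hli hφ⟩

end KHPaper
end

section
/- Let X, Y be Banach–Kantorovich spaces over L^0 and a: X → Y an L^0-bounded L^0-linear operator which is homogeneous of type n, with {ψ₁,…,ψₙ} a basis of a(X). Then there exist L^0-bounded L^0-linear functionals g₁,…,gₙ ∈ X* such that a(φ) = ∑ₖ gₖ(φ)ψₖ for all φ ∈ X. -/
open MeasureTheory

namespace KHPaper

variable {Ω : Type} [MeasurableSpace Ω] {μ : Measure Ω}

/-! The coordinates of `a φ` in the basis `ψ` are `L⁰`-linear in `φ`, so everything reduces to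
bounding each coordinate on the span of `ψ`: `|dᵢ| ≤ k ‖∑ⱼ dⱼ ψⱼ‖`. By induction on `n` this
holds for the other vectors `ψⱼ`, `j ≠ i`. Let `V` be the pointwise infimum of
`‖ψᵢ + ∑_{j ≠ i} cⱼ ψⱼ‖` over all coefficients `c`; gluing along idempotents the norms at a
dense countable set of constant coefficients makes `V` the limit of a decreasing sequence of
such norms. On `{V = 0}` the coefficients of that sequence are Cauchy by the induction
hypothesis, and their limit is a relation `1_{V = 0} ψᵢ + ∑ⱼ cⱼ ψⱼ = 0`; by independence
`{V = 0}` is null. Hence `V > 0` a.e. and `k = 1 / V` works. -/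

noncomputable instance : CommRing (L0R Ω μ) :=
  { (inferInstance : AddCommGroup (L0R Ω μ)),
    (inferInstance : CommMonoid (L0R Ω μ)) with
    left_distrib := fun a b c => by
      apply AEEqFun.ext
      filter_upwards [AEEqFun.coeFn_mul a (b + c), AEEqFun.coeFn_add b c,
        AEEqFun.coeFn_mul a b, AEEqFun.coeFn_mul a c,
        AEEqFun.coeFn_add (a * b) (a * c)] with x h1 h2 h3 h4 h5
      simp only [h1, h5, Pi.mul_apply, Pi.add_apply, h2, h3, h4, mul_add]
    right_distrib := fun a b c => by
      apply AEEqFun.ext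
      filter_upwards [AEEqFun.coeFn_mul (a + b) c, AEEqFun.coeFn_add a b,
        AEEqFun.coeFn_mul a c, AEEqFun.coeFn_mul b c,
        AEEqFun.coeFn_add (a * c) (b * c)] with x h1 h2 h3 h4 h5
      simp only [h1, h5, Pi.mul_apply, Pi.add_apply, h2, h3, h4, add_mul]
    zero_mul := fun a => by
      apply AEEqFun.ext
      filter_upwards [AEEqFun.coeFn_mul 0 a, AEEqFun.coeFn_zero (β := ℝ) (μ := μ)] with x h1 h2
      simp [h1, h2]
    mul_zero := fun a => by
      apply AEEqFun.ext
      filter_upwards [AEEqFun.coeFn_mul a 0, AEEqFun.coeFn_zero (β := ℝ) (μ := μ)] with x h1 h2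
      simp [h1, h2] }

theorem L0R.le_def {f g : L0R Ω μ} : f ≤ g ↔ ∀ᵐ ω ∂μ, f ω ≤ g ω := AEEqFun.coeFn_le.symm

instance : IsOrderedRing (L0R Ω μ) where
  add_le_add_left a b hab c := by
    rw [L0R.le_def] at hab ⊢
    filter_upwards [hab, AEEqFun.coeFn_add a c, AEEqFun.coeFn_add b c] with x h h1 h2
    simp only [h1, h2, Pi.add_apply]
    linarith
  zero_le_one := by
    rw [L0R.le_def]
    filter_upwards [AEEqFun.coeFn_zero (β := ℝ) (μ := μ),
      AEEqFun.coeFn_one (β := ℝ) (μ := μ)] with x h0 h1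
    simp [h0, h1]
  mul_le_mul_of_nonneg_left a ha b c hbc := by
    rw [L0R.le_def] at ha hbc ⊢
    filter_upwards [ha, hbc, AEEqFun.coeFn_mul a b, AEEqFun.coeFn_mul a c,
      AEEqFun.coeFn_zero (β := ℝ) (μ := μ)] with x h h' h1 h2 h0
    simp only [h1, h2, Pi.mul_apply]
    exact mul_le_mul_of_nonneg_left h' (by simpa [h0] using h)
  mul_le_mul_of_nonneg_right a ha b c hbc := by
    rw [L0R.le_def] at ha hbc ⊢
    filter_upwards [ha, hbc, AEEqFun.coeFn_mul b a, AEEqFun.coeFn_mul c a,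
      AEEqFun.coeFn_zero (β := ℝ) (μ := μ)] with x h h' h1 h2 h0
    simp only [h1, h2, Pi.mul_apply]
    exact mul_le_mul_of_nonneg_right h' (by simpa [h0] using h)

theorem coeFn_absL (f : L0 Ω μ) : ⇑(absL f) =ᵐ[μ] fun ω => ‖f ω‖ :=
  AEEqFun.coeFn_comp _ _ f

theorem absL_nonneg (f : L0 Ω μ) : 0 ≤ absL f := by
  rw [L0R.le_def]
  filter_upwards [coeFn_absL f, AEEqFun.coeFn_zero (β := ℝ) (μ := μ)] with ω h1 h2
  rw [h1, h2]
  exact norm_nonneg _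

theorem absL_neg_one : absL (-1 : L0 Ω μ) = 1 := by
  apply AEEqFun.ext
  filter_upwards [coeFn_absL (-1 : L0 Ω μ), AEEqFun.coeFn_neg (1 : L0 Ω μ),
    AEEqFun.coeFn_one (β := ℂ) (μ := μ), AEEqFun.coeFn_one (β := ℝ) (μ := μ)] with ω h1 h2 h3 h4
  simp [h1, h2, h3, h4]

theorem coeFn_constL (z : ℂ) : ⇑(constL Ω μ z) =ᵐ[μ] fun _ => z :=
  AEEqFun.coeFn_const Ω z

theorem coeFn_finsetSum {γ : Type*} [TopologicalSpace γ] [AddCommMonoid γ] [ContinuousAdd γ]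
    {ι : Type*} (s : Finset ι) (f : ι → Ω →ₘ[μ] γ) :
    ⇑(∑ j ∈ s, f j) =ᵐ[μ] fun ω => ∑ j ∈ s, f j ω := by
  induction s using Finset.cons_induction with
  | empty => exact AEEqFun.coeFn_zero (β := γ) (μ := μ)
  | cons a s ha ih =>
    filter_upwards [AEEqFun.coeFn_add (f a) (∑ j ∈ s, f j), ih] with ω h1 h2
    simp only [Finset.sum_cons, h1, Pi.add_apply, h2]

theorem coeFn_sum_absL_mul {ι : Type*} [Countable ι] (s : Finset ι) (c : ι → L0 Ω μ)
    (w : ι → L0R Ω μ) :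
    ⇑(∑ j ∈ s, absL (c j) * w j) =ᵐ[μ] fun ω => ∑ j ∈ s, ‖c j ω‖ * w j ω := by
  have h : ∀ᵐ ω ∂μ, ∀ j, (absL (c j) * w j) ω = ‖c j ω‖ * w j ω := by
    rw [ae_all_iff]
    intro j
    filter_upwards [AEEqFun.coeFn_mul (absL (c j)) (w j), coeFn_absL (c j)] with ω h1 h2
    rw [h1, Pi.mul_apply, h2]
  filter_upwards [coeFn_finsetSum s fun j => absL (c j) * w j, h] with ω h1 h2
  simp only [h1, h2]

theorem cauchySeq_of_dist_le_add {β : Type*} [PseudoMetricSpace β] {u : ℕ → β} {b : ℕ → ℝ}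
    (hb : Filter.Tendsto b Filter.atTop (nhds 0)) (h : ∀ m l, dist (u m) (u l) ≤ b m + b l) :
    CauchySeq u := by
  refine Metric.cauchySeq_iff'.2 fun ε hε => ?_
  obtain ⟨N, hN⟩ := Filter.eventually_atTop.1 (hb.eventually (gt_mem_nhds (half_pos hε)))
  exact ⟨N, fun m hm => (h m N).trans_lt (by linarith [hN m hm, hN N le_rfl])⟩

theorem AEEqFun.exists_tendsto_of_cauchySeq {β : Type*} [MetricSpace β] [CompleteSpace β]
    [Nonempty β] (f : ℕ → Ω →ₘ[μ] β) (hf : ∀ᵐ ω ∂μ, CauchySeq fun m => f m ω) :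
    ∃ g : Ω →ₘ[μ] β, ∀ᵐ ω ∂μ, Filter.Tendsto (fun m => f m ω) Filter.atTop (nhds (g ω)) := by
  have hlim : ∀ᵐ ω ∂μ, Filter.Tendsto (fun m => f m ω) Filter.atTop
      (nhds (Filter.limUnder Filter.atTop fun m => f m ω)) :=
    hf.mono fun ω h => h.tendsto_limUnder
  refine ⟨AEEqFun.mk _ (aestronglyMeasurable_of_tendsto_ae _
    (fun m => (f m).aestronglyMeasurable) hlim), ?_⟩
  filter_upwards [hlim, AEEqFun.coeFn_mk _ (aestronglyMeasurable_of_tendsto_ae _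
    (fun m => (f m).aestronglyMeasurable) hlim)] with ω h1 h2
  rwa [h2]

theorem L0R.exists_tendsto_of_antitone {h : ℕ → L0R Ω μ} (h0 : ∀ m, 0 ≤ h m)
    (hh : Antitone h) :
    ∃ V : L0R Ω μ, 0 ≤ V ∧ (∀ m, V ≤ h m) ∧
      ∀ᵐ ω ∂μ, Filter.Tendsto (fun m => h m ω) Filter.atTop (nhds (V ω)) := by
  have hpt : ∀ᵐ ω ∂μ, (∀ m, 0 ≤ h m ω) ∧ Antitone fun m => h m ω := by
    have h0' : ∀ᵐ ω ∂μ, ∀ m, 0 ≤ h m ω := ae_all_iff.2 fun m => by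
      filter_upwards [L0R.le_def.1 (h0 m), AEEqFun.coeFn_zero (β := ℝ) (μ := μ)] with ω h1 h2
      simpa [h2] using h1
    have hh' : ∀ᵐ ω ∂μ, ∀ m, h (m + 1) ω ≤ h m ω :=
      ae_all_iff.2 fun m => L0R.le_def.1 (hh m.le_succ)
    filter_upwards [h0', hh'] with ω h1 h2
    exact ⟨h1, antitone_nat_of_succ_le h2⟩
  have hlim : ∀ᵐ ω ∂μ, Filter.Tendsto (fun m => h m ω) Filter.atTop
      (nhds (⨅ m, h m ω)) :=
    hpt.mono fun ω hω => tendsto_atTop_ciInf hω.2 ⟨0, by rintro _ ⟨m, rfl⟩; exact hω.1 m⟩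
  have hmeas := aestronglyMeasurable_of_tendsto_ae _ (fun m => (h m).aestronglyMeasurable) hlim
  have hV := AEEqFun.coeFn_mk _ hmeas
  refine ⟨AEEqFun.mk _ hmeas, ?_, fun m => ?_, ?_⟩
  · rw [L0R.le_def]
    filter_upwards [hpt, hV, AEEqFun.coeFn_zero (β := ℝ) (μ := μ)] with ω hω h1 h2
    rw [h1, h2]
    exact le_ciInf hω.1
  · rw [L0R.le_def]
    filter_upwards [hpt, hV] with ω hω h1
    rw [h1]
    exact ciInf_le ⟨0, by rintro _ ⟨m, rfl⟩; exact hω.1 m⟩ m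
  · filter_upwards [hlim, hV] with ω h1 h2
    rwa [h2]

theorem IsIdem.ae_eq_zero_or_eq_one {π : L0 Ω μ} (hπ : IsIdem π) :
    ∀ᵐ ω ∂μ, π ω = 0 ∨ π ω = 1 := by
  have h := AEEqFun.coeFn_mul π π
  rw [show π * π = π from hπ] at h
  filter_upwards [h] with ω h
  rw [Pi.mul_apply] at h
  rcases mul_eq_zero.1 (show π ω * (π ω - 1) = 0 by linear_combination -h) with h0 | h1
  · exact Or.inl h0
  · exact Or.inr (sub_eq_zero.1 h1)

theorem IsIdem.one_sub {π : L0 Ω μ} (hπ : IsIdem π) : IsIdem (1 - π) := by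
  unfold IsIdem at *
  linear_combination hπ

theorem IsIdem.absL_add_absL_one_sub {π : L0 Ω μ} (hπ : IsIdem π) :
    absL π + absL (1 - π) = 1 := by
  apply AEEqFun.ext
  filter_upwards [hπ.ae_eq_zero_or_eq_one, AEEqFun.coeFn_add (absL π) (absL (1 - π)),
    coeFn_absL π, coeFn_absL (1 - π), AEEqFun.coeFn_sub (1 : L0 Ω μ) π,
    AEEqFun.coeFn_one (β := ℂ) (μ := μ),
    AEEqFun.coeFn_one (β := ℝ) (μ := μ)] with ω h h1 h2 h3 h4 h5 h6
  rcases h with h | h <;> simp [h, h1, h2, h3, h4, h5, h6]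

noncomputable def indicatorLt (f g : L0R Ω μ) : L0 Ω μ :=
  AEEqFun.comp₂Measurable (fun a b : ℝ => if a < b then (1 : ℂ) else 0)
    (Measurable.ite (measurableSet_lt measurable_fst measurable_snd) measurable_const
      measurable_const) f g

theorem coeFn_indicatorLt (f g : L0R Ω μ) :
    ⇑(indicatorLt f g) =ᵐ[μ] fun ω => if f ω < g ω then (1 : ℂ) else 0 :=
  AEEqFun.coeFn_comp₂Measurable _ _ f g

theorem isIdem_indicatorLt (f g : L0R Ω μ) : IsIdem (indicatorLt f g) := by
  apply AEEqFun.ext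
  filter_upwards [AEEqFun.coeFn_mul (indicatorLt f g) (indicatorLt f g),
    coeFn_indicatorLt f g] with ω h1 h2
  by_cases h : f ω < g ω <;> simp [h1, h2, h]

theorem absL_indicatorLt_mul_add (f g : L0R Ω μ) :
    absL (indicatorLt f g) * f + absL (1 - indicatorLt f g) * g = f ⊓ g := by
  apply AEEqFun.ext
  filter_upwards [coeFn_indicatorLt f g, coeFn_absL (indicatorLt f g),
    coeFn_absL (1 - indicatorLt f g),
    AEEqFun.coeFn_sub (1 : L0 Ω μ) (indicatorLt f g), AEEqFun.coeFn_one (β := ℂ) (μ := μ),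
    AEEqFun.coeFn_add (absL (indicatorLt f g) * f) (absL (1 - indicatorLt f g) * g),
    AEEqFun.coeFn_mul (absL (indicatorLt f g)) f, AEEqFun.coeFn_mul (absL (1 - indicatorLt f g)) g,
    AEEqFun.coeFn_inf f g] with ω h h1 h2 h3 h4 h5 h6 h7 h8
  simp only [h5, h6, h7, h8, Pi.add_apply, Pi.mul_apply, h1, h2, h3, Pi.sub_apply, h4, h,
    Pi.one_apply]
  by_cases hlt : f ω < g ω
  · simp [hlt, hlt.le]
  · simp [hlt, not_lt.1 hlt]

namespace BKSpace

variable {X : Type*} [AddCommGroup X] [Module (L0 Ω μ) X] (B : BKSpace Ω μ X)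

theorem nrm_zero : B.nrm 0 = 0 := (B.nrm_eq_zero 0).2 rfl

theorem nrm_neg (x : X) : B.nrm (-x) = B.nrm x := by
  rw [← neg_one_smul (L0 Ω μ) x, B.nrm_smul, absL_neg_one, one_mul]

theorem nrm_sub_le (x y : X) : B.nrm (x - y) ≤ B.nrm x + B.nrm y := by
  simpa only [sub_eq_add_neg, nrm_neg] using B.nrm_triangle x (-y)

theorem nrm_le_nrm_add_nrm_sub (x y : X) : B.nrm x ≤ B.nrm y + B.nrm (x - y) := by
  simpa using B.nrm_triangle y (x - y)

theorem nrm_sum_smul_le {ι : Type*} (s : Finset ι) (c : ι → L0 Ω μ) (x : ι → X) :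
    B.nrm (∑ j ∈ s, c j • x j) ≤ ∑ j ∈ s, absL (c j) * B.nrm (x j) := by
  induction s using Finset.cons_induction with
  | empty => simp [nrm_zero]
  | cons a s ha ih =>
    rw [Finset.sum_cons, Finset.sum_cons, ← B.nrm_smul]
    exact (B.nrm_triangle _ _).trans (add_le_add le_rfl ih)

theorem nrm_mix {π : L0 Ω μ} (hπ : IsIdem π) (x y : X) :
    B.nrm (π • x + (1 - π) • y) = absL π * B.nrm x + absL (1 - π) * B.nrm y := by
  have hπ' : π * (1 - π) = 0 := by unfold IsIdem at hπ; linear_combination -hπ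
  set z := π • x + (1 - π) • y
  have hx : π • z = π • x := by
    simp only [z, smul_add, smul_smul, show π * π = π from hπ, hπ', zero_smul, add_zero]
  have hy : (1 - π) • z = (1 - π) • y := by
    simp only [z, smul_add, smul_smul, mul_comm (1 - π) π, hπ', zero_smul, zero_add]
    rw [show (1 - π) * (1 - π) = 1 - π from hπ.one_sub]
  calc B.nrm z = (absL π + absL (1 - π)) * B.nrm z := by rw [hπ.absL_add_absL_one_sub, one_mul]
    _ = _ := by rw [add_mul, ← B.nrm_smul, ← B.nrm_smul, hx, hy, B.nrm_smul, B.nrm_smul]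

theorem nrm_mix_indicatorLt (x y : X) :
    B.nrm (indicatorLt (B.nrm x) (B.nrm y) • x + (1 - indicatorLt (B.nrm x) (B.nrm y)) • y)
      = B.nrm x ⊓ B.nrm y := by
  rw [B.nrm_mix (isIdem_indicatorLt _ _), absL_indicatorLt_mul_add]

theorem exists_seq_antitone_nrm (S : Set X)
    (hS : ∀ π : L0 Ω μ, IsIdem π → ∀ x ∈ S, ∀ y ∈ S, π • x + (1 - π) • y ∈ S)
    (x : ℕ → X) (hx : ∀ t, x t ∈ S) :
    ∃ y : ℕ → X, (∀ m, y m ∈ S) ∧ Antitone (fun m => B.nrm (y m)) ∧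
      ∀ t, B.nrm (y t) ≤ B.nrm (x t) := by
  let y : ℕ → X := fun m => Nat.rec (x 0) (fun m ym =>
    indicatorLt (B.nrm (x (m + 1))) (B.nrm ym) • x (m + 1) +
      (1 - indicatorLt (B.nrm (x (m + 1))) (B.nrm ym)) • ym) m
  have hy : ∀ m, B.nrm (y (m + 1)) = B.nrm (x (m + 1)) ⊓ B.nrm (y m) :=
    fun m => B.nrm_mix_indicatorLt _ _
  refine ⟨y, fun m => ?_, antitone_nat_of_succ_le fun m => ?_, fun t => ?_⟩
  · induction m with
    | zero => exact hx 0
    | succ m ih => exact hS _ (isIdem_indicatorLt _ _) _ (hx _) _ ih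
  · exact (hy m).trans_le inf_le_right
  · cases t with
    | zero => exact le_rfl
    | succ t => exact (hy t).trans_le inf_le_left

theorem eq_zero_of_nrm_le_of_tendsto {x : X} {b : ℕ → L0R Ω μ}
    (hb : ∀ᵐ ω ∂μ, Filter.Tendsto (fun m => b m ω) Filter.atTop (nhds 0))
    (hx : ∀ m, B.nrm x ≤ b m) : x = 0 := by
  refine (B.nrm_eq_zero x).1 (le_antisymm ?_ (B.nrm_nonneg x))
  rw [L0R.le_def]
  filter_upwards [hb, ae_all_iff.2 fun m => L0R.le_def.1 (hx m),
    AEEqFun.coeFn_zero (β := ℝ) (μ := μ)] with ω h1 h2 h3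
  rw [h3]
  exact ge_of_tendsto' h1 h2

section Coordinates

variable {ι : Type*} [Fintype ι] {ψ₀ : X} {ψ : ι → X}

theorem le_nrm_of_le_nrm_const {q : ℕ → ι → ℂ} (hq : DenseRange q) {V : L0R Ω μ}
    (hV : ∀ t, V ≤ B.nrm (ψ₀ + ∑ j, constL Ω μ (q t j) • ψ j)) (c : ι → L0 Ω μ) :
    V ≤ B.nrm (ψ₀ + ∑ j, c j • ψ j) := by
  set N := B.nrm (ψ₀ + ∑ j, c j • ψ j)
  have ht : ∀ t, V ≤ N + ∑ j, absL (constL Ω μ (q t j) - c j) * B.nrm (ψ j) := by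
    intro t
    have hdiff : ψ₀ + ∑ j, constL Ω μ (q t j) • ψ j - (ψ₀ + ∑ j, c j • ψ j)
        = ∑ j, (constL Ω μ (q t j) - c j) • ψ j := by
      simp only [add_sub_add_left_eq_sub, ← Finset.sum_sub_distrib, sub_smul]
    refine (hV t).trans ((B.nrm_le_nrm_add_nrm_sub _ _).trans (add_le_add le_rfl ?_))
    rw [hdiff]
    exact B.nrm_sum_smul_le _ _ _
  have hconst : ∀ᵐ ω ∂μ, ∀ t j, (constL Ω μ (q t j) - c j) ω = q t j - c j ω :=
    ae_all_iff.2 fun t => ae_all_iff.2 fun j => by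
      filter_upwards [AEEqFun.coeFn_sub (constL Ω μ (q t j)) (c j),
        coeFn_constL (q t j)] with ω h1 h2
      rw [h1, Pi.sub_apply, h2]
  rw [L0R.le_def]
  filter_upwards [ae_all_iff.2 fun t => L0R.le_def.1 (ht t), hconst,
    ae_all_iff.2 fun t => AEEqFun.coeFn_add N
      (∑ j, absL (constL Ω μ (q t j) - c j) * B.nrm (ψ j)),
    ae_all_iff.2 fun t => coeFn_sum_absL_mul Finset.univ
      (fun j => constL Ω μ (q t j) - c j) (fun j => B.nrm (ψ j))] with ω h1 h2 h3 h4
  have key : V ω ≤ N ω + ∑ j, ‖c j ω - c j ω‖ * B.nrm (ψ j) ω := by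
    refine hq.induction_on (p := fun z => V ω ≤ N ω + ∑ j, ‖z j - c j ω‖ * B.nrm (ψ j) ω)
      (fun j => c j ω) (isClosed_le continuous_const (by fun_prop)) fun t => ?_
    simpa only [h3 t, Pi.add_apply, h4 t, h2 t] using h1 t
  simpa using key

theorem exists_tendsto_coeff
    (hcoord : ∀ j, ∃ k : L0R Ω μ, 0 ≤ k ∧
      ∀ d : ι → L0 Ω μ, absL (d j) ≤ k * B.nrm (∑ t, d t • ψ t))
    (e : ℕ → ι → L0 Ω μ) {b : ℕ → L0R Ω μ}
    (hb : ∀ᵐ ω ∂μ, Filter.Tendsto (fun m => b m ω) Filter.atTop (nhds 0))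
    (he : ∀ m l, B.nrm (∑ t, (e m t - e l t) • ψ t) ≤ b m + b l) :
    ∃ c : ι → L0 Ω μ, ∀ j, ∀ᵐ ω ∂μ,
      Filter.Tendsto (fun m => e m j ω) Filter.atTop (nhds (c j ω)) := by
  suffices h : ∀ j, ∀ᵐ ω ∂μ, CauchySeq fun m => e m j ω by
    choose c hc using fun j => AEEqFun.exists_tendsto_of_cauchySeq (fun m => e m j) (h j)
    exact ⟨c, hc⟩
  intro j
  obtain ⟨k, hk0, hk⟩ := hcoord j
  have hdiff : ∀ m l, absL (e m j - e l j) ≤ k * b m + k * b l := fun m l =>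
    (hk fun t => e m t - e l t).trans ((mul_le_mul_of_nonneg_left (he m l) hk0).trans_eq
      (mul_add _ _ _))
  have hpt : ∀ m l, ∀ᵐ ω ∂μ, ‖e m j ω - e l j ω‖ ≤ k ω * b m ω + k ω * b l ω := by
    intro m l
    filter_upwards [L0R.le_def.1 (hdiff m l), coeFn_absL (e m j - e l j),
      AEEqFun.coeFn_sub (e m j) (e l j), AEEqFun.coeFn_add (k * b m) (k * b l),
      AEEqFun.coeFn_mul k (b m), AEEqFun.coeFn_mul k (b l)] with ω h h1 h2 h3 h4 h5
    simpa only [h1, h2, h3, h4, h5, Pi.sub_apply, Pi.add_apply, Pi.mul_apply] using h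
  filter_upwards [hb, ae_all_iff.2 fun m => ae_all_iff.2 (hpt m)] with ω hbω hω
  exact cauchySeq_of_dist_le_add (by simpa using hbω.const_mul (k ω))
    fun m l => (dist_eq_norm _ _).trans_le (hω m l)

theorem ae_pos_of_tendsto_nrm (hind : ∀ (c₀ : L0 Ω μ) (c : ι → L0 Ω μ),
      c₀ • ψ₀ + ∑ j, c j • ψ j = 0 → c₀ = 0)
    (hcoord : ∀ j, ∃ k : L0R Ω μ, 0 ≤ k ∧
      ∀ d : ι → L0 Ω μ, absL (d j) ≤ k * B.nrm (∑ t, d t • ψ t))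
    {D : ℕ → ι → L0 Ω μ} {V : L0R Ω μ} (hV0 : 0 ≤ V)
    (hV : ∀ᵐ ω ∂μ, Filter.Tendsto (fun m => B.nrm (ψ₀ + ∑ j, D m j • ψ j) ω)
      Filter.atTop (nhds (V ω))) :
    ∀ᵐ ω ∂μ, 0 < V ω := by
  set v : ℕ → X := fun m => ψ₀ + ∑ j, D m j • ψ j
  set π : L0 Ω μ := 1 - indicatorLt 0 V
  have hπ : ∀ᵐ ω ∂μ, π ω = if 0 < V ω then 0 else 1 := by
    filter_upwards [AEEqFun.coeFn_sub (1 : L0 Ω μ) (indicatorLt 0 V), coeFn_indicatorLt 0 V,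
      AEEqFun.coeFn_one (β := ℂ) (μ := μ), AEEqFun.coeFn_zero (β := ℝ) (μ := μ)]
      with ω h1 h2 h3 h4
    by_cases hV : 0 < V ω <;> simp [π, h1, h2, h3, h4, hV]
  set b : ℕ → L0R Ω μ := fun m => absL π * B.nrm (v m)
  have hb : ∀ᵐ ω ∂μ, Filter.Tendsto (fun m => b m ω) Filter.atTop (nhds 0) := by
    have hb' : ∀ᵐ ω ∂μ, ∀ m, b m ω = ‖π ω‖ * B.nrm (v m) ω := ae_all_iff.2 fun m => by
      filter_upwards [AEEqFun.coeFn_mul (absL π) (B.nrm (v m)), coeFn_absL π] with ω h1 h2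
      rw [h1, Pi.mul_apply, h2]
    filter_upwards [hV, hπ, hb', L0R.le_def.1 hV0, AEEqFun.coeFn_zero (β := ℝ) (μ := μ)]
      with ω h1 h2 h3 h4 h5
    simp only [h3, h2]
    by_cases hpos : 0 < V ω
    · simp [hpos]
    · have : V ω = 0 := le_antisymm (not_lt.1 hpos) (by simpa [h5] using h4)
      simpa [hpos, this] using h1
  set e : ℕ → ι → L0 Ω μ := fun m j => π * D m j
  have he : ∀ m l, B.nrm (∑ t, (e m t - e l t) • ψ t) ≤ b m + b l := by
    intro m l
    have : ∑ t, (e m t - e l t) • ψ t = π • (v m - v l) := by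
      simp only [e, v, add_sub_add_left_eq_sub, ← Finset.sum_sub_distrib, ← sub_smul,
        Finset.smul_sum, smul_smul, mul_sub]
    rw [this, B.nrm_smul, ← mul_add]
    exact mul_le_mul_of_nonneg_left (B.nrm_sub_le _ _) (absL_nonneg π)
  obtain ⟨c, hc⟩ := B.exists_tendsto_coeff hcoord e hb he
  have hrel : ∀ m, B.nrm (π • ψ₀ + ∑ j, c j • ψ j)
      ≤ b m + ∑ j, absL (c j - e m j) * B.nrm (ψ j) := by
    intro m
    have : π • ψ₀ + ∑ j, c j • ψ j = π • v m + ∑ j, (c j - e m j) • ψ j := by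
      simp only [v, e, smul_add, Finset.smul_sum, smul_smul, add_assoc,
        ← Finset.sum_add_distrib, ← add_smul, add_sub_cancel]
    rw [this]
    exact (B.nrm_triangle _ _).trans
      (add_le_add (B.nrm_smul _ _).le (B.nrm_sum_smul_le _ _ _))
  have hπ0 : π = 0 := by
    refine hind π c (B.eq_zero_of_nrm_le_of_tendsto ?_ hrel)
    have hsub : ∀ᵐ ω ∂μ, ∀ m j, (c j - e m j) ω = c j ω - e m j ω :=
      ae_all_iff.2 fun m => ae_all_iff.2 fun j => by
        filter_upwards [AEEqFun.coeFn_sub (c j) (e m j)] with ω h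
        rw [h, Pi.sub_apply]
    filter_upwards [hb, ae_all_iff.2 hc, hsub,
      ae_all_iff.2 fun m => AEEqFun.coeFn_add (b m) (∑ j, absL (c j - e m j) * B.nrm (ψ j)),
      ae_all_iff.2 fun m => coeFn_sum_absL_mul Finset.univ (fun j => c j - e m j)
        (fun j => B.nrm (ψ j))] with ω h1 h2 h3 h4 h5
    simp only [h4, h5, h3, Pi.add_apply]
    have hsum : Filter.Tendsto (fun m => ∑ j, ‖c j ω - e m j ω‖ * B.nrm (ψ j) ω)
        Filter.atTop (nhds 0) := by
      simpa using tendsto_finsetSum Finset.univ fun j _ =>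
        ((h2 j).const_sub (c j ω)).norm.mul_const (B.nrm (ψ j) ω)
    simpa using h1.add hsum
  filter_upwards [hπ, AEEqFun.coeFn_zero (β := ℂ) (μ := μ)] with ω h1 h2
  rw [hπ0, h2] at h1
  by_contra hpos
  simp [hpos] at h1

theorem absL_mul_le_nrm_of_le_nrm {V : L0R Ω μ}
    (hV : ∀ c : ι → L0 Ω μ, V ≤ B.nrm (ψ₀ + ∑ j, c j • ψ j)) (c₀ : L0 Ω μ) (c : ι → L0 Ω μ) :
    absL c₀ * V ≤ B.nrm (c₀ • ψ₀ + ∑ j, c j • ψ j) := by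
  -- pointwise pseudo-inverse of `c₀`: `0⁻¹ = 0` gives `c₀ * r * c₀ = c₀` and `|c₀ * r| ≤ 1`
  set r : L0 Ω μ := AEEqFun.compMeasurable Inv.inv measurable_inv c₀
  have hr : ∀ᵐ ω ∂μ, r ω = (c₀ ω)⁻¹ := AEEqFun.coeFn_compMeasurable _ _ c₀
  have hrc : c₀ * r * c₀ = c₀ := by
    apply AEEqFun.ext
    filter_upwards [AEEqFun.coeFn_mul (c₀ * r) c₀, AEEqFun.coeFn_mul c₀ r, hr] with ω h1 h2 h3
    rw [h1, Pi.mul_apply, h2, Pi.mul_apply, h3, mul_inv_mul_cancel]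
  have habs : absL (c₀ * r) ≤ 1 := by
    rw [L0R.le_def]
    filter_upwards [coeFn_absL (c₀ * r), AEEqFun.coeFn_mul c₀ r, hr,
      AEEqFun.coeFn_one (β := ℝ) (μ := μ)] with ω h1 h2 h3 h4
    rw [h1, h2, h4, Pi.mul_apply, h3, Pi.one_apply]
    by_cases h0 : c₀ ω = 0 <;> simp [h0]
  calc absL c₀ * V ≤ absL c₀ * B.nrm (ψ₀ + ∑ j, (r * c j) • ψ j) :=
        mul_le_mul_of_nonneg_left (hV _) (absL_nonneg c₀)
    _ = absL (c₀ * r) * B.nrm (c₀ • ψ₀ + ∑ j, c j • ψ j) := by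
        rw [← B.nrm_smul, ← B.nrm_smul, smul_add, smul_add, smul_smul, hrc, Finset.smul_sum,
          Finset.smul_sum]
        simp only [smul_smul, mul_assoc]
    _ ≤ 1 * B.nrm (c₀ • ψ₀ + ∑ j, c j • ψ j) :=
        mul_le_mul_of_nonneg_right habs (B.nrm_nonneg _)
    _ = B.nrm (c₀ • ψ₀ + ∑ j, c j • ψ j) := one_mul _

theorem exists_absL_le_of_le_nrm {V : L0R Ω μ} (hpos : ∀ᵐ ω ∂μ, 0 < V ω)
    (hV : ∀ c : ι → L0 Ω μ, V ≤ B.nrm (ψ₀ + ∑ j, c j • ψ j)) :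
    ∃ k : L0R Ω μ, 0 ≤ k ∧ ∀ (c₀ : L0 Ω μ) (c : ι → L0 Ω μ),
      absL c₀ ≤ k * B.nrm (c₀ • ψ₀ + ∑ j, c j • ψ j) := by
  set k : L0R Ω μ := AEEqFun.compMeasurable Inv.inv measurable_inv V
  have hk : ∀ᵐ ω ∂μ, k ω = (V ω)⁻¹ := AEEqFun.coeFn_compMeasurable _ _ V
  refine ⟨k, ?_, fun c₀ c => ?_⟩
  · rw [L0R.le_def]
    filter_upwards [hk, hpos, AEEqFun.coeFn_zero (β := ℝ) (μ := μ)] with ω h1 h2 h3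
    rw [h1, h3]
    exact (inv_pos.2 h2).le
  · set N := B.nrm (c₀ • ψ₀ + ∑ j, c j • ψ j)
    rw [L0R.le_def]
    filter_upwards [L0R.le_def.1 (B.absL_mul_le_nrm_of_le_nrm hV c₀ c), hk, hpos,
      AEEqFun.coeFn_mul (absL c₀) V, AEEqFun.coeFn_mul k N] with ω h1 h2 h3 h4 h5
    rw [h4, Pi.mul_apply] at h1
    rw [h5, Pi.mul_apply, h2, ← div_eq_inv_mul, le_div_iff₀ h3]
    exact h1

theorem exists_absL_le_of_coord_bounded (hind : ∀ (c₀ : L0 Ω μ) (c : ι → L0 Ω μ),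
      c₀ • ψ₀ + ∑ j, c j • ψ j = 0 → c₀ = 0)
    (hcoord : ∀ j, ∃ k : L0R Ω μ, 0 ≤ k ∧
      ∀ d : ι → L0 Ω μ, absL (d j) ≤ k * B.nrm (∑ t, d t • ψ t)) :
    ∃ k : L0R Ω μ, 0 ≤ k ∧ ∀ (c₀ : L0 Ω μ) (c : ι → L0 Ω μ),
      absL c₀ ≤ k * B.nrm (c₀ • ψ₀ + ∑ j, c j • ψ j) := by
  set v : (ι → L0 Ω μ) → X := fun c => ψ₀ + ∑ j, c j • ψ j
  have hmix : ∀ π : L0 Ω μ, IsIdem π → ∀ x ∈ Set.range v, ∀ y ∈ Set.range v,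
      π • x + (1 - π) • y ∈ Set.range v := by
    rintro π - _ ⟨c, rfl⟩ _ ⟨c', rfl⟩
    refine ⟨fun j => π * c j + (1 - π) * c' j, ?_⟩
    simp only [v, smul_add, Finset.smul_sum, smul_smul, add_smul, Finset.sum_add_distrib]
    rw [add_add_add_comm, ← add_smul, add_sub_cancel, one_smul]
  set q := TopologicalSpace.denseSeq (ι → ℂ)
  obtain ⟨y, hyv, hy_anti, hy_le⟩ := B.exists_seq_antitone_nrm (Set.range v) hmix
    (fun t => v fun j => constL Ω μ (q t j)) fun t => ⟨_, rfl⟩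
  choose D hD using hyv
  obtain ⟨V, hV0, hVy, hlim⟩ :=
    L0R.exists_tendsto_of_antitone (fun m => B.nrm_nonneg (y m)) hy_anti
  have hV : ∀ c, V ≤ B.nrm (v c) :=
    B.le_nrm_of_le_nrm_const (TopologicalSpace.denseRange_denseSeq _)
      fun t => (hVy t).trans (hy_le t)
  have hpos : ∀ᵐ ω ∂μ, 0 < V ω :=
    B.ae_pos_of_tendsto_nrm hind hcoord hV0 (D := D) (by simpa only [v, hD] using hlim)
  exact B.exists_absL_le_of_le_nrm hpos hV

end Coordinates

theorem exists_absL_coord_le {n : ℕ} {ψ : Fin n → X} (hψ : LinearIndependent (L0 Ω μ) ψ)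
    (i : Fin n) : ∃ k : L0R Ω μ, 0 ≤ k ∧
      ∀ d : Fin n → L0 Ω μ, absL (d i) ≤ k * B.nrm (∑ j, d j • ψ j) := by
  induction n with
  | zero => exact i.elim0
  | succ n ih =>
    have hind : ∀ (c₀ : L0 Ω μ) (c : Fin n → L0 Ω μ),
        c₀ • ψ i + ∑ j, c j • ψ (i.succAbove j) = 0 → c₀ = 0 := by
      intro c₀ c h
      have := Fintype.linearIndependent_iff.1 hψ (Fin.insertNth i c₀ c)
        (by simpa [Fin.sum_univ_succAbove _ i] using h) i
      simpa using this
    obtain ⟨k, hk0, hk⟩ := B.exists_absL_le_of_coord_bounded hind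
      fun j => ih (hψ.comp _ Fin.succAbove_right_injective) j
    exact ⟨k, hk0, fun d => by
      simpa [Fin.sum_univ_succAbove _ i] using hk (d i) (d ∘ i.succAbove)⟩

end BKSpace

theorem statement2_general {X Y : Type*} [AddCommGroup X] [Module (L0 Ω μ) X]
    [AddCommGroup Y] [Module (L0 Ω μ) Y]
    (BX : BKSpace Ω μ X) (BY : BKSpace Ω μ Y) (a : X →ₗ[L0 Ω μ] Y)
    (hbound : ∃ c : L0R Ω μ, ∀ x : X, BY.nrm (a x) ≤ c * BX.nrm x)
    (n : ℕ) (ψ : Fin n → Y)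
    (hbasis : ∀ y ∈ LinearMap.range a, ∃! c : Fin n → L0 Ω μ, y = ∑ i, c i • ψ i) :
    ∃ g : Fin n → (X →ₗ[L0 Ω μ] L0 Ω μ),
      (∀ i, ∃ c : L0R Ω μ, ∀ x : X, absL (g i x) ≤ c * BX.nrm x) ∧
      ∀ x : X, a x = ∑ i, g i x • ψ i := by
  obtain ⟨cb, hcb⟩ := hbound
  have hψ : LinearIndependent (L0 Ω μ) ψ := Fintype.linearIndependent_iff.2 fun c hc => by
    obtain ⟨c₀, -, huniq⟩ := hbasis 0 (zero_mem _)
    rw [huniq c hc.symm, ← huniq 0 (by simp)]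
    exact fun _ => rfl
  set T := Fintype.linearCombination (L0 Ω μ) ψ
  have hT := linearIndependent_iff_injective_fintypeLinearCombination.1 hψ
  have hrange : ∀ x, a x ∈ LinearMap.range T := fun x => by
    obtain ⟨c, hc, -⟩ := hbasis (a x) ⟨x, rfl⟩
    exact ⟨c, by rw [hc, Fintype.linearCombination_apply]⟩
  set g := (LinearEquiv.ofInjective T hT).symm.toLinearMap ∘ₗ a.codRestrict _ hrange
  have hg : ∀ x, a x = ∑ i, g x i • ψ i := fun x => by
    have h := congrArg Subtype.val
      ((LinearEquiv.ofInjective T hT).apply_symm_apply ⟨a x, hrange x⟩)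
    rw [LinearEquiv.ofInjective_apply] at h
    rw [← Fintype.linearCombination_apply]
    exact h.symm
  refine ⟨fun i => LinearMap.proj i ∘ₗ g, fun i => ?_, hg⟩
  obtain ⟨k, hk0, hk⟩ := BY.exists_absL_coord_le hψ i
  refine ⟨k * cb, fun x => (hk (g x)).trans ?_⟩
  rw [← hg, mul_assoc]
  exact mul_le_mul_of_nonneg_left (hcb x) hk0

/-- An `L⁰`-bounded `L⁰`-linear operator between Banach–Kantorovich
spaces which is homogeneous of type `n`, with basis `ψ₁,…,ψₙ` of its range, has the
form `a(φ) = ∑ gₖ(φ) ψₖ` for `L⁰`-bounded `L⁰`-linear functionals `gₖ ∈ X*`. -/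
theorem statement2 {X Y : Type*} [AddCommGroup X] [Module (L0 Ω μ) X]
    [AddCommGroup Y] [Module (L0 Ω μ) Y]
    (BX : BKSpace Ω μ X) (BY : BKSpace Ω μ Y) (a : X →ₗ[L0 Ω μ] Y)
    (hbound : ∃ c : L0R Ω μ, ∀ x : X, BY.nrm (a x) ≤ c * BX.nrm x)
    (n : ℕ) (ψ : Fin n → Y) (hmem : ∀ i, ψ i ∈ LinearMap.range a)
    (hbasis : ∀ y ∈ LinearMap.range a, ∃! c : Fin n → L0 Ω μ, y = ∑ i, c i • ψ i) :
    ∃ g : Fin n → (X →ₗ[L0 Ω μ] L0 Ω μ),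
      (∀ i, ∃ c : L0R Ω μ, ∀ x : X, absL (g i x) ≤ c * BX.nrm x) ∧
      ∀ x : X, a x = ∑ i, g i x • ψ i :=
  statement2_general BX BY a hbound n ψ hbasis

end KHPaper
end

section
/- Every L^0-linear derivation δ: U → L(D) of a standard algebra U ⊆ L(D) is spatially implemented: there exists x ∈ L(D) such that δ(a) = xa − ax for all a ∈ U. -/
open MeasureTheory

namespace KHPaper

variable {Ω : Type} [MeasurableSpace Ω] {μ : Measure Ω}

/-!
For a functional `f` with `f e = 1` (here `⟨·, e⟩`) write `φ ⊗ e := f.smulRight φ`, so that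
`(φ ⊗ e) e = φ` and `a * (φ ⊗ e) = (a φ) ⊗ e`. Evaluating the Leibniz rule for `a * (φ ⊗ e)` at `e`
gives `δ a φ = x (a φ) - a (x φ)` with `x φ := δ (φ ⊗ e) e`, and `x` is linear because `δ` is
linear on the rank-one operators, which are finite-generated and hence lie in `U`.
-/

lemma sqrtL_eq_one {r : L0R Ω μ} (h : sqrtL r = 1) : r = 1 := by
  induction r using AEEqFun.induction_on with
  | H F hF =>
    rw [sqrtL, AEEqFun.comp_mk, AEEqFun.one_def, AEEqFun.mk_eq_mk] at h
    rw [AEEqFun.one_def, AEEqFun.mk_eq_mk]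
    filter_upwards [h] with ω hω using Real.sqrt_eq_one.mp hω

lemma ofRealL_one : ofRealL (1 : L0R Ω μ) = 1 := by
  simp only [ofRealL, AEEqFun.one_def, AEEqFun.comp_mk]
  rfl

lemma KHInner.inner_self_eq_one {X : Type*} [AddCommGroup X] [Module (L0 Ω μ) X]
    (K : KHInner Ω μ X) {x : X} (h : K.knorm x = 1) : K.inner x x = 1 := by
  rw [K.self_real, sqrtL_eq_one h, ofRealL_one]

section SpatialDerivation

variable {R M : Type*} [CommRing R] [AddCommGroup M] [Module R M]
  {U : Set (Module.End R M)} {δ : Module.End R M → Module.End R M}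

lemma mul_smulRight (a : Module.End R M) (f : M →ₗ[R] R) (φ : M) :
    a * f.smulRight φ = f.smulRight (a φ) := by
  ext η
  simp

lemma derivation_apply_eq_of_smulRight_mem
    (hder : ∀ a ∈ U, ∀ b ∈ U, δ (a * b) = δ a * b + a * δ b)
    {f : M →ₗ[R] R} {e : M} (hfe : f e = 1) {a : Module.End R M} (ha : a ∈ U) {φ : M}
    (hφ : f.smulRight φ ∈ U) :
    δ a φ = δ (f.smulRight (a φ)) e - a (δ (f.smulRight φ) e) := by
  have hleibniz := congrArg (fun b : Module.End R M => b e) (hder a ha _ hφ)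
  simp only [mul_smulRight, Module.End.mul_apply, LinearMap.add_apply,
    LinearMap.smulRight_apply, hfe, one_smul] at hleibniz
  rw [hleibniz, add_sub_cancel_right]

theorem exists_eq_commutator_of_smulRight_mem (f : M →ₗ[R] R) (e : M) (hfe : f e = 1)
    (hU : ∀ φ, f.smulRight φ ∈ U)
    (hadd : ∀ a ∈ U, ∀ b ∈ U, δ (a + b) = δ a + δ b)
    (hsmul : ∀ c : R, ∀ a ∈ U, δ (c • a) = c • δ a)
    (hder : ∀ a ∈ U, ∀ b ∈ U, δ (a * b) = δ a * b + a * δ b) :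
    ∃ x : Module.End R M, ∀ a ∈ U, δ a = x * a - a * x := by
  let x : Module.End R M :=
    { toFun := fun φ => δ (f.smulRight φ) e
      map_add' := fun φ ψ => by
        change δ (LinearMap.smulRightₗ f (φ + ψ)) e = _
        rw [map_add, LinearMap.smulRightₗ_apply, LinearMap.smulRightₗ_apply,
          hadd _ (hU φ) _ (hU ψ)]
        rfl
      map_smul' := fun c φ => by
        change δ (LinearMap.smulRightₗ f (c • φ)) e = _
        rw [map_smul, LinearMap.smulRightₗ_apply, hsmul c _ (hU φ)]
        rfl }
  refine ⟨x, fun a ha => LinearMap.ext fun φ => ?_⟩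
  exact derivation_apply_eq_of_smulRight_mem hder hfe ha (hU φ)

end SpatialDerivation

lemma finGenOp_smulRight {M : Type*} [AddCommGroup M] [Module (L0 Ω μ) M]
    (f : M →ₗ[L0 Ω μ] L0 Ω μ) (φ : M) : FinGenOp (f.smulRight φ) :=
  ⟨1, fun _ => φ, fun η => ⟨fun _ => f η, by simp⟩⟩

def KHInner.innerRight {X : Type*} [AddCommGroup X] [Module (L0 Ω μ) X]
    (K : KHInner Ω μ X) (ψ : X) : X →ₗ[L0 Ω μ] L0 Ω μ where
  toFun η := K.inner η ψ
  map_add' η η' := K.add_left η η' ψ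
  map_smul' c η := K.smul_left c η ψ

theorem statement8_general {X : Type*} [AddCommGroup X] [Module (L0 Ω μ) X]
    (K : KHInner Ω μ X) (D : Submodule (L0 Ω μ) X)
    (e : D) (he : K.knorm (e : X) = 1)
    (U : Set (Module.End (L0 Ω μ) D)) (hU : IsStandard U)
    (δ : Module.End (L0 Ω μ) D → Module.End (L0 Ω μ) D)
    (hadd : ∀ a ∈ U, ∀ b ∈ U, δ (a + b) = δ a + δ b)
    (hsmul : ∀ c : L0 Ω μ, ∀ a ∈ U, δ (c • a) = c • δ a)
    (hder : ∀ a ∈ U, ∀ b ∈ U, δ (a * b) = δ a * b + a * δ b) :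
    ∃ x : Module.End (L0 Ω μ) D, ∀ a ∈ U, δ a = x * a - a * x :=
  exists_eq_commutator_of_smulRight_mem ((K.innerRight e).comp D.subtype) e
    (K.inner_self_eq_one he) (fun φ => hU.2 _ (finGenOp_smulRight _ φ)) hadd hsmul hder

/-- Every `L⁰`-linear derivation `δ : U → L(D)` of a standard
algebra `U ⊆ L(D)` is inner: `δ(a) = xa - ax` for some `x ∈ L(D)`. -/
theorem statement8 {X : Type*} [AddCommGroup X] [Module (L0 Ω μ) X]
    (K : KHInner Ω μ X) (hK : K.IsKH) (D : Submodule (L0 Ω μ) X)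
    (hD : BODenseN K.knorm (D : Set X))
    (e : D) (he : K.knorm (e : X) = 1)
    (U : Set (Module.End (L0 Ω μ) D)) (hU : IsStandard U)
    (δ : Module.End (L0 Ω μ) D → Module.End (L0 Ω μ) D)
    (hadd : ∀ a ∈ U, ∀ b ∈ U, δ (a + b) = δ a + δ b)
    (hsmul : ∀ c : L0 Ω μ, ∀ a ∈ U, δ (c • a) = c • δ a)
    (hder : ∀ a ∈ U, ∀ b ∈ U, δ (a * b) = δ a * b + a * δ b) :
    ∃ x : Module.End (L0 Ω μ) D, ∀ a ∈ U, δ a = x * a - a * x :=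
  statement8_general K D e he U hU δ hadd hsmul hder

end KHPaper
end

section
/- Every L^0-linear derivation δ: U → L⁺(D) of an algebra U containing F⁺(D) := F(D) ∩ L⁺(D) is inner: there exists x ∈ L⁺(D) with δ(a) = xa − ax for all a ∈ U. In particular, every L^0-linear derivation of L⁺(D) is inner. -/
open MeasureTheory

namespace KHPaper

variable {Ω : Type} [MeasurableSpace Ω] {μ : Measure Ω}

/-!
Fix a unit vector `e` and write `φ ⊗ ψ` for the rank one operator `η ↦ ⟨η, ψ⟩ φ`; these lie in
`F⁺(D) ⊆ U`. Put `x φ := δ(φ ⊗ e) e`. Since `a (φ ⊗ e) = (a φ) ⊗ e` and `(φ ⊗ e) e = φ`, the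
Leibniz rule gives `x (a φ) = δ(a) φ + a (x φ)`, i.e. `δ(a) = x a - a x`. Applying the Leibniz
rule to `(e ⊗ ψ)(φ ⊗ e) = ⟨φ, ψ⟩ (e ⊗ e)` and pairing with `e` expresses `⟨x φ, ψ⟩` through
the adjoint of `δ(e ⊗ ψ)`, which shows `x ∈ L⁺(D)`.
-/

section Scalars

lemma conjL_coeFn (f : L0 Ω μ) : ⇑(conjL f) =ᵐ[μ] fun ω => (starRingEnd ℂ) (f ω) :=
  AEEqFun.coeFn_comp _ _ f

lemma sqrtL_coeFn (f : L0R Ω μ) : ⇑(sqrtL f) =ᵐ[μ] fun ω => Real.sqrt (f ω) :=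
  AEEqFun.coeFn_comp _ _ f

lemma ofRealL_coeFn (f : L0R Ω μ) : ⇑(ofRealL f) =ᵐ[μ] fun ω => ((f ω : ℝ) : ℂ) :=
  AEEqFun.coeFn_comp _ _ f

lemma conjL_add (f g : L0 Ω μ) : conjL (f + g) = conjL f + conjL g := by
  apply AEEqFun.ext
  filter_upwards [conjL_coeFn (f + g), AEEqFun.coeFn_add f g,
    AEEqFun.coeFn_add (conjL f) (conjL g), conjL_coeFn f, conjL_coeFn g] with ω h1 h2 h3 h4 h5
  simp only [h1, h2, h3, Pi.add_apply, h4, h5, map_add]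

lemma conjL_mul (f g : L0 Ω μ) : conjL (f * g) = conjL f * conjL g := by
  apply AEEqFun.ext
  filter_upwards [conjL_coeFn (f * g), AEEqFun.coeFn_mul f g,
    AEEqFun.coeFn_mul (conjL f) (conjL g), conjL_coeFn f, conjL_coeFn g] with ω h1 h2 h3 h4 h5
  simp only [h1, h2, h3, Pi.mul_apply, h4, h5, map_mul]

lemma conjL_conjL (f : L0 Ω μ) : conjL (conjL f) = f := by
  apply AEEqFun.ext
  filter_upwards [conjL_coeFn (conjL f), conjL_coeFn f] with ω h1 h2
  simp only [h1, h2, Complex.conj_conj]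

lemma eq_one_of_sqrtL_eq_one {r : L0R Ω μ} (hr : 0 ≤ r) (h : sqrtL r = 1) : r = 1 := by
  rw [← AEEqFun.coeFn_le] at hr
  have h' : ⇑(sqrtL r) =ᵐ[μ] ⇑(1 : L0R Ω μ) := by rw [h]
  apply AEEqFun.ext
  filter_upwards [sqrtL_coeFn r, h',
    AEEqFun.coeFn_one (β := ℝ) (μ := μ), AEEqFun.coeFn_zero (β := ℝ) (μ := μ), hr]
    with ω hsqrt hsqrt_one hone hzero hnonneg
  rw [hzero] at hnonneg
  have hsq : Real.sqrt (r ω) = 1 := by rw [← hsqrt, hsqrt_one, hone, Pi.one_apply]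
  rw [hone, Pi.one_apply, ← Real.sq_sqrt hnonneg, hsq, one_pow]

end Scalars

namespace KHInner

variable {X : Type*} [AddCommGroup X] [Module (L0 Ω μ) X] (K : KHInner Ω μ X)

lemma inner_self_eq_one_s9 {x : X} (h : K.knorm x = 1) : K.inner x x = 1 := by
  rw [K.self_real x, eq_one_of_sqrtL_eq_one (K.self_nonneg x) h, ofRealL_one]

lemma inner_add_right (x y z : X) : K.inner x (y + z) = K.inner x y + K.inner x z := by
  rw [K.conj_symm x (y + z), K.add_left, conjL_add, ← K.conj_symm, ← K.conj_symm]

lemma inner_smul_right (c : L0 Ω μ) (x y : X) : K.inner x (c • y) = conjL c * K.inner x y := by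
  rw [K.conj_symm x (c • y), K.smul_left, conjL_mul, ← K.conj_symm]

lemma inner_sub_right (x y z : X) : K.inner x (y - z) = K.inner x y - K.inner x z := by
  rw [eq_sub_iff_add_eq, ← inner_add_right, sub_add_cancel]

end KHInner

section RankOne

variable {X : Type*} [AddCommGroup X] [Module (L0 Ω μ) X] (K : KHInner Ω μ X)
  (D : Submodule (L0 Ω μ) X)

lemma rankOneE_apply (φ ψ η : D) : rankOneE K D φ ψ η = K.inner (η : X) (ψ : X) • φ := rfl

lemma finGenOp_rankOneE (φ ψ : D) : FinGenOp (rankOneE K D φ ψ) :=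
  ⟨1, fun _ => φ, fun η => ⟨fun _ => K.inner (η : X) (ψ : X), by simp [rankOneE_apply]⟩⟩

lemma hasAdjE_rankOneE (φ ψ : D) : HasAdjE K D (rankOneE K D φ ψ) := by
  intro ρ
  refine ⟨K.inner (ρ : X) (φ : X) • ψ, fun η => ?_⟩
  rw [rankOneE_apply, Submodule.coe_smul, K.smul_left, Submodule.coe_smul,
    K.inner_smul_right, ← K.conj_symm, mul_comm]

lemma rankOneE_add_left (φ φ' ψ : D) :
    rankOneE K D (φ + φ') ψ = rankOneE K D φ ψ + rankOneE K D φ' ψ :=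
  LinearMap.ext fun _ => smul_add _ _ _

lemma rankOneE_smul_left (c : L0 Ω μ) (φ ψ : D) :
    rankOneE K D (c • φ) ψ = c • rankOneE K D φ ψ :=
  LinearMap.ext fun _ => smul_comm _ _ _

lemma mul_rankOneE (a : Module.End (L0 Ω μ) D) (φ ψ : D) :
    a * rankOneE K D φ ψ = rankOneE K D (a φ) ψ :=
  LinearMap.ext fun _ => a.map_smul _ _

lemma rankOneE_mul_rankOneE (χ ψ φ ρ : D) :
    rankOneE K D χ ψ * rankOneE K D φ ρ = K.inner (φ : X) (ψ : X) • rankOneE K D χ ρ := by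
  refine LinearMap.ext fun η => ?_
  simp only [Module.End.mul_apply, LinearMap.smul_apply, rankOneE_apply, Submodule.coe_smul,
    K.smul_left, mul_comm (K.inner (η : X) (ρ : X)), mul_smul]

lemma rankOneE_apply_of_inner_self_eq_one {e : D} (he : K.inner (e : X) (e : X) = 1) (φ : D) :
    rankOneE K D φ e e = φ := by
  rw [rankOneE_apply, he, one_smul]

end RankOne

section Derivation

variable {X : Type*} [AddCommGroup X] [Module (L0 Ω μ) X] (K : KHInner Ω μ X)
  (D : Submodule (L0 Ω μ) X)
  {U : Set (Module.End (L0 Ω μ) D)} {δ : Module.End (L0 Ω μ) D → Module.End (L0 Ω μ) D}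

noncomputable def implementingOp (e : D) (hmem : ∀ φ : D, rankOneE K D φ e ∈ U)
    (hadd : ∀ a ∈ U, ∀ b ∈ U, δ (a + b) = δ a + δ b)
    (hsmul : ∀ c : L0 Ω μ, ∀ a ∈ U, δ (c • a) = c • δ a) : Module.End (L0 Ω μ) D where
  toFun φ := δ (rankOneE K D φ e) e
  map_add' φ ψ := by
    rw [rankOneE_add_left, hadd _ (hmem φ) _ (hmem ψ)]
    rfl
  map_smul' c φ := by
    rw [rankOneE_smul_left, hsmul c _ (hmem φ)]
    rfl

variable {K D}

lemma implementingOp_apply {e : D} (hmem : ∀ φ : D, rankOneE K D φ e ∈ U)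
    (hadd : ∀ a ∈ U, ∀ b ∈ U, δ (a + b) = δ a + δ b)
    (hsmul : ∀ c : L0 Ω μ, ∀ a ∈ U, δ (c • a) = c • δ a) (φ : D) :
    implementingOp K D e hmem hadd hsmul φ = δ (rankOneE K D φ e) e := rfl

lemma eq_implementingOp_mul_sub {e : D} (he : K.inner (e : X) (e : X) = 1)
    (hmem : ∀ φ : D, rankOneE K D φ e ∈ U)
    (hadd : ∀ a ∈ U, ∀ b ∈ U, δ (a + b) = δ a + δ b)
    (hsmul : ∀ c : L0 Ω μ, ∀ a ∈ U, δ (c • a) = c • δ a)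
    (hder : ∀ a ∈ U, ∀ b ∈ U, δ (a * b) = δ a * b + a * δ b) {a : Module.End (L0 Ω μ) D}
    (ha : a ∈ U) :
    δ a = implementingOp K D e hmem hadd hsmul * a - a * implementingOp K D e hmem hadd hsmul := by
  refine LinearMap.ext fun φ => ?_
  have leibniz : δ (rankOneE K D (a φ) e) = δ a * rankOneE K D φ e + a * δ (rankOneE K D φ e) := by
    rw [← mul_rankOneE, hder a ha _ (hmem φ)]
  rw [LinearMap.sub_apply, Module.End.mul_apply, Module.End.mul_apply, implementingOp_apply,
    implementingOp_apply, leibniz, LinearMap.add_apply, Module.End.mul_apply,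
    rankOneE_apply_of_inner_self_eq_one K D he, Module.End.mul_apply, add_sub_cancel_right]

lemma hasAdjE_implementingOp {e : D} (he : K.inner (e : X) (e : X) = 1)
    (hmem : ∀ φ ψ : D, rankOneE K D φ ψ ∈ U) (hδL : ∀ a ∈ U, δ a ∈ LPlusE K D)
    (hadd : ∀ a ∈ U, ∀ b ∈ U, δ (a + b) = δ a + δ b)
    (hsmul : ∀ c : L0 Ω μ, ∀ a ∈ U, δ (c • a) = c • δ a)
    (hder : ∀ a ∈ U, ∀ b ∈ U, δ (a * b) = δ a * b + a * δ b) :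
    HasAdjE K D (implementingOp K D e (hmem · e) hadd hsmul) := by
  intro ψ
  set c := K.inner ((δ (rankOneE K D e e) e : D) : X) (e : X)
  obtain ⟨χ, hχ⟩ := hδL _ (hmem e ψ) e
  refine ⟨conjL c • ψ - χ, fun φ => ?_⟩
  have leibniz : K.inner (φ : X) (ψ : X) • δ (rankOneE K D e e)
      = δ (rankOneE K D e ψ) * rankOneE K D φ e + rankOneE K D e ψ * δ (rankOneE K D φ e) := by
    rw [← hsmul _ _ (hmem e e), ← rankOneE_mul_rankOneE, hder _ (hmem e ψ) _ (hmem φ e)]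
  have paired := congrArg (fun f : Module.End (L0 Ω μ) D => K.inner ((f e : D) : X) (e : X)) leibniz
  simp only [LinearMap.smul_apply, LinearMap.add_apply, Module.End.mul_apply,
    rankOneE_apply_of_inner_self_eq_one K D he, rankOneE_apply, Submodule.coe_smul,
    Submodule.coe_add, K.smul_left, K.add_left, hχ φ, he, mul_one] at paired
  rw [implementingOp_apply, Submodule.coe_sub, Submodule.coe_smul, K.inner_sub_right,
    K.inner_smul_right, conjL_conjL]
  linear_combination -paired

end Derivation

theorem statement9_general {X : Type*} [AddCommGroup X] [Module (L0 Ω μ) X]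
    (K : KHInner Ω μ X) (D : Submodule (L0 Ω μ) X)
    (e : D) (he : K.knorm (e : X) = 1)
    (U : Set (Module.End (L0 Ω μ) D))
    (hF : ∀ a : Module.End (L0 Ω μ) D, FinGenOp a → a ∈ LPlusE K D → a ∈ U)
    (δ : Module.End (L0 Ω μ) D → Module.End (L0 Ω μ) D)
    (hδL : ∀ a ∈ U, δ a ∈ LPlusE K D)
    (hadd : ∀ a ∈ U, ∀ b ∈ U, δ (a + b) = δ a + δ b)
    (hsmul : ∀ c : L0 Ω μ, ∀ a ∈ U, δ (c • a) = c • δ a)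
    (hder : ∀ a ∈ U, ∀ b ∈ U, δ (a * b) = δ a * b + a * δ b) :
    ∃ x ∈ LPlusE K D, ∀ a ∈ U, δ a = x * a - a * x := by
  have he' : K.inner (e : X) (e : X) = 1 := K.inner_self_eq_one_s9 he
  have hmem : ∀ φ ψ : D, rankOneE K D φ ψ ∈ U := fun φ ψ =>
    hF _ (finGenOp_rankOneE K D φ ψ) (hasAdjE_rankOneE K D φ ψ)
  exact ⟨implementingOp K D e (hmem · e) hadd hsmul,
    hasAdjE_implementingOp he' hmem hδL hadd hsmul hder,
    fun a ha => eq_implementingOp_mul_sub he' (hmem · e) hadd hsmul hder ha⟩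

/-- Every `L⁰`-linear derivation `δ : U → L⁺(D)` of an algebra
`U ⊇ F⁺(D) = F(D) ∩ L⁺(D)` is inner, with the implementing operator in `L⁺(D)`. -/
theorem statement9 {X : Type*} [AddCommGroup X] [Module (L0 Ω μ) X]
    (K : KHInner Ω μ X) (hK : K.IsKH) (D : Submodule (L0 Ω μ) X)
    (hD : BODenseN K.knorm (D : Set X))
    (e : D) (he : K.knorm (e : X) = 1)
    (U : Set (Module.End (L0 Ω μ) D)) (hUsub : IsSubalgebraSet U)
    (hUL : U ⊆ LPlusE K D)
    (hF : ∀ a : Module.End (L0 Ω μ) D, FinGenOp a → a ∈ LPlusE K D → a ∈ U)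
    (δ : Module.End (L0 Ω μ) D → Module.End (L0 Ω μ) D)
    (hδL : ∀ a ∈ U, δ a ∈ LPlusE K D)
    (hadd : ∀ a ∈ U, ∀ b ∈ U, δ (a + b) = δ a + δ b)
    (hsmul : ∀ c : L0 Ω μ, ∀ a ∈ U, δ (c • a) = c • δ a)
    (hder : ∀ a ∈ U, ∀ b ∈ U, δ (a * b) = δ a * b + a * δ b) :
    ∃ x ∈ LPlusE K D, ∀ a ∈ U, δ a = x * a - a * x :=
  statement9_general K D e he U hF δ hδL hadd hsmul hder

end KHPaper
end
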